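/- If k11(η) ≠ 0, the piecewise-defined scaled torque function M1 : ℝ → ℝ is Lipschitz continuous (in particular continuous, even though it is defined piecewise with switchings at ψ = ±α and ψ = ±(π − α)). -/

import Mathlib

open Real

/-- Solar-radiation-pressure torque coefficient `k11`. -/
noncomputable def k11 (w mb ms d α η : ℝ) : ℝ :=
  Real.sin α * (2 * d * mb * (2 * η * Real.cos (2 * α) + η + 1) +
    w * (mb + ms) * (Real.cos α - η * Real.cos (3 * α)))

/-- Torque coefficient `k20`. -/
noncomputable def k20 (w mb ms d α η : ℝ) : ℝ :=
  Real.sin α ^ 2 * (4 * d * η * mb * Real.cos α +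
    w * (mb + ms) * (1 - η * Real.cos (2 * α)))

/-- Torque coefficient `k02`. -/
noncomputable def k02 (w mb ms d α η : ℝ) : ℝ :=
  Real.cos α * (2 * d * mb * (η * Real.cos (2 * α) + 1) +
    η * w * (mb + ms) * Real.sin α * Real.sin (2 * α))

/-- Scaled torque produced by panel `P₊`. -/
noncomputable def M0plus (w mb ms d α η : ℝ) (ψ : ℝ) : ℝ :=
  -(1 / 2) * Real.sin (2 * ψ)
    + (k20 w mb ms d α η / k11 w mb ms d α η) * Real.cos ψ ^ 2
    + (k02 w mb ms d α η / k11 w mb ms d α η) * Real.sin ψ ^ 2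

/-- Scaled torque produced by panel `P₋`. -/
noncomputable def M0minus (w mb ms d α η : ℝ) (ψ : ℝ) : ℝ :=
  -(1 / 2) * Real.sin (2 * ψ)
    - (k20 w mb ms d α η / k11 w mb ms d α η) * Real.cos ψ ^ 2
    - (k02 w mb ms d α η / k11 w mb ms d α η) * Real.sin ψ ^ 2

/-- Piecewise scaled torque `M1`. -/
noncomputable def M1 (w mb ms d α η : ℝ) (ψ : ℝ) : ℝ :=
  Set.indicator (Set.Icc (-α) (Real.pi - α)) (M0minus w mb ms d α η) ψ +
  Set.indicator (Set.Icc (-Real.pi + α) α) (M0plus w mb ms d α η) ψ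


-- indicator as composition with clamp
lemma indicator_Icc_eq_comp {f : ℝ → ℝ} {a b : ℝ} (hab : a ≤ b)
    (ha : f a = 0) (hb : f b = 0) :
    Set.indicator (Set.Icc a b) f = fun x => f (max a (min b x)) := by
  funext x
  by_cases hx : x ∈ Set.Icc a b
  · rw [Set.indicator_of_mem hx]
    rw [min_eq_right hx.2, max_eq_right hx.1]
  · rw [Set.indicator_of_notMem hx]
    rw [Set.mem_Icc, not_and_or] at hx
    rcases hx with h | h
    · push_neg at h
      rw [min_eq_right (le_of_lt (lt_of_lt_of_le h hab)), max_eq_left (le_of_lt h), ha]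
    · push_neg at h
      rw [min_eq_left (le_of_lt h), max_eq_right hab, hb]

lemma lip_indicator {f : ℝ → ℝ} {a b : ℝ} {K : NNReal} (hab : a ≤ b)
    (ha : f a = 0) (hb : f b = 0) (hf : LipschitzWith K f) :
    LipschitzWith K (Set.indicator (Set.Icc a b) f) := by
  rw [indicator_Icc_eq_comp hab ha hb]
  have h1 : LipschitzWith 1 (fun x : ℝ => max a (min b x)) :=
    (LipschitzWith.id.const_min b).const_max a
  simpa [Function.comp_def] using hf.comp h1

-- generic Lipschitz for the trig form
lemma lip_trig (a b c : ℝ) :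
    ∃ K : NNReal, LipschitzWith K
      (fun ψ => a * Real.sin (2 * ψ) + b * Real.cos ψ ^ 2 + c * Real.sin ψ ^ 2) := by
  refine ⟨⟨2 * |a| + 2 * |b| + 2 * |c|, by positivity⟩, ?_⟩
  have hd : ∀ ψ : ℝ, HasDerivAt
      (fun ψ => a * Real.sin (2 * ψ) + b * Real.cos ψ ^ 2 + c * Real.sin ψ ^ 2)
      (a * (Real.cos (2 * ψ) * 2) + b * (2 * Real.cos ψ ^ 1 * (-Real.sin ψ))
        + c * (2 * Real.sin ψ ^ 1 * Real.cos ψ)) ψ := by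
    intro ψ
    have h1 : HasDerivAt (fun ψ : ℝ => Real.sin (2 * ψ)) (Real.cos (2 * ψ) * 2) ψ := by
      simpa [Function.comp_def] using (Real.hasDerivAt_sin (2 * ψ)).comp ψ ((hasDerivAt_id ψ).const_mul 2)
    exact (((h1.const_mul a).add (((Real.hasDerivAt_cos ψ).pow 2).const_mul b)).add
      (((Real.hasDerivAt_sin ψ).pow 2).const_mul c))
  refine lipschitzOnWith_univ.mp ?_
  apply Convex.lipschitzOnWith_of_nnnorm_hasDerivWithin_le (f' := fun ψ =>
      a * (Real.cos (2 * ψ) * 2) + b * (2 * Real.cos ψ ^ 1 * (-Real.sin ψ))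
        + c * (2 * Real.sin ψ ^ 1 * Real.cos ψ)) convex_univ
    (fun ψ _ => (hd ψ).hasDerivWithinAt)
  intro ψ _
  refine NNReal.coe_le_coe.mp ?_
  show ‖_‖ ≤ 2 * |a| + 2 * |b| + 2 * |c|
  rw [Real.norm_eq_abs]
  have b1 : |a * (Real.cos (2 * ψ) * 2)| ≤ 2 * |a| := by
    rw [abs_mul]
    have := Real.abs_cos_le_one (2 * ψ)
    calc |a| * |Real.cos (2*ψ) * 2| ≤ |a| * 2 := by
          rw [abs_mul]
          have : |Real.cos (2*ψ)| * |(2:ℝ)| ≤ 1 * 2 := by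
            apply mul_le_mul this (by norm_num) (by norm_num) zero_le_one
          nlinarith [abs_nonneg a]
      _ = 2 * |a| := by ring
  have b2 : |b * (2 * Real.cos ψ ^ 1 * (-Real.sin ψ))| ≤ 2 * |b| := by
    rw [abs_mul]
    have h1 := Real.abs_cos_le_one ψ
    have h2 := Real.abs_sin_le_one ψ
    have : |2 * Real.cos ψ ^ 1 * (-Real.sin ψ)| ≤ 2 := by
      rw [abs_mul, abs_mul, abs_neg, pow_one, abs_two]
      nlinarith [abs_nonneg (Real.cos ψ), abs_nonneg (Real.sin ψ)]
    nlinarith [abs_nonneg b]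
  have b3 : |c * (2 * Real.sin ψ ^ 1 * Real.cos ψ)| ≤ 2 * |c| := by
    rw [abs_mul]
    have h1 := Real.abs_cos_le_one ψ
    have h2 := Real.abs_sin_le_one ψ
    have : |2 * Real.sin ψ ^ 1 * Real.cos ψ| ≤ 2 := by
      rw [abs_mul, abs_mul, pow_one, abs_two]
      nlinarith [abs_nonneg (Real.cos ψ), abs_nonneg (Real.sin ψ)]
    nlinarith [abs_nonneg c]
  calc |a * (Real.cos (2 * ψ) * 2) + b * (2 * Real.cos ψ ^ 1 * (-Real.sin ψ))
        + c * (2 * Real.sin ψ ^ 1 * Real.cos ψ)|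
      ≤ |a * (Real.cos (2 * ψ) * 2) + b * (2 * Real.cos ψ ^ 1 * (-Real.sin ψ))|
        + |c * (2 * Real.sin ψ ^ 1 * Real.cos ψ)| := abs_add_le _ _
    _ ≤ (|a * (Real.cos (2 * ψ) * 2)| + |b * (2 * Real.cos ψ ^ 1 * (-Real.sin ψ))|)
        + |c * (2 * Real.sin ψ ^ 1 * Real.cos ψ)| := by gcongr; exact abs_add_le _ _
    _ ≤ 2 * |a| + 2 * |b| + 2 * |c| := by linarith

lemma key_ident (w mb ms d α η : ℝ) :
    k20 w mb ms d α η * Real.cos α ^ 2 + k02 w mb ms d α η * Real.sin α ^ 2 =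
      Real.sin α * Real.cos α * k11 w mb ms d α η := by
  unfold k20 k02 k11
  rw [Real.cos_two_mul, Real.cos_three_mul, Real.sin_two_mul]
  linear_combination (2 * η * w * (mb + ms) * Real.sin α ^ 2 * Real.cos α ^ 2) *
    Real.sin_sq_add_cos_sq α

theorem stmt7 (w mb ms d α η : ℝ) (hw : 0 < w) (hmb : 0 < mb) (hms : 0 < ms)
    (hα : α ∈ Set.Ioo 0 (π / 2)) (hη : η ∈ Set.Ioo (0:ℝ) 1)
    (hk : k11 w mb ms d α η ≠ 0) :
    ∃ K : NNReal, LipschitzWith K (M1 w mb ms d α η) := by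
  set C1 := k20 w mb ms d α η / k11 w mb ms d α η with hC1
  set C2 := k02 w mb ms d α η / k11 w mb ms d α η with hC2
  have hquot : C1 * Real.cos α ^ 2 + C2 * Real.sin α ^ 2 = Real.sin α * Real.cos α := by
    rw [hC1, hC2]
    field_simp
    linear_combination key_ident w mb ms d α η
  -- endpoint values
  have hm1 : M0minus w mb ms d α η (-α) = 0 := by
    unfold M0minus
    have h : (2:ℝ) * -α = -(2 * α) := by ring
    rw [h, Real.sin_neg, Real.cos_neg, Real.sin_neg, Real.sin_two_mul]
    linear_combination -hquot
  have hm2 : M0minus w mb ms d α η (π - α) = 0 := by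
    unfold M0minus
    have h : (2:ℝ) * (π - α) = 2 * π - 2 * α := by ring
    rw [h, Real.sin_sub, Real.sin_two_pi, Real.cos_two_pi, Real.cos_pi_sub,
      Real.sin_pi_sub, Real.sin_two_mul]
    linear_combination -hquot
  have hp1 : M0plus w mb ms d α η α = 0 := by
    unfold M0plus
    rw [Real.sin_two_mul]
    linear_combination hquot
  have hp2 : M0plus w mb ms d α η (-π + α) = 0 := by
    unfold M0plus
    have h : (2:ℝ) * (-π + α) = 2 * α - 2 * π := by ring
    have h2 : -π + α = -(π - α) := by ring
    rw [h, h2, Real.sin_sub, Real.sin_two_pi, Real.cos_two_pi, Real.cos_neg,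
      Real.sin_neg, Real.cos_pi_sub, Real.sin_pi_sub, Real.sin_two_mul]
    linear_combination hquot
  -- Lipschitz of the pieces
  obtain ⟨K1, hK1⟩ := lip_trig (-(1/2)) (-C1) (-C2)
  obtain ⟨K2, hK2⟩ := lip_trig (-(1/2)) C1 C2
  have hem : M0minus w mb ms d α η =
      fun ψ => -(1/2) * Real.sin (2 * ψ) + -C1 * Real.cos ψ ^ 2 + -C2 * Real.sin ψ ^ 2 := by
    funext ψ; unfold M0minus; rw [← hC1, ← hC2]; ring
  have hep : M0plus w mb ms d α η =
      fun ψ => -(1/2) * Real.sin (2 * ψ) + C1 * Real.cos ψ ^ 2 + C2 * Real.sin ψ ^ 2 := by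
    funext ψ; unfold M0plus; rw [← hC1, ← hC2]
  rw [hem] at hm1 hm2
  rw [hep] at hp1 hp2
  have hab1 : -α ≤ π - α := by linarith [Real.pi_pos]
  have hab2 : -π + α ≤ α := by linarith [Real.pi_pos, hα.1]
  have h1 := lip_indicator hab1 hm1 hm2 hK1
  have h2 := lip_indicator hab2 hp2 hp1 hK2
  refine ⟨K1 + K2, ?_⟩
  have : M1 w mb ms d α η = fun ψ =>
      Set.indicator (Set.Icc (-α) (π - α))
        (fun ψ => -(1/2) * Real.sin (2 * ψ) + -C1 * Real.cos ψ ^ 2 + -C2 * Real.sin ψ ^ 2) ψ +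
      Set.indicator (Set.Icc (-π + α) α)
        (fun ψ => -(1/2) * Real.sin (2 * ψ) + C1 * Real.cos ψ ^ 2 + C2 * Real.sin ψ ^ 2) ψ := by
    funext ψ; rw [M1, hem, hep]
  rw [this]
  exact h1.add h2
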